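/- Let g be a standard Gaussian random variable and let f : ℝ → ℝ be a C^∞ function all of whose derivatives of every order are bounded. Then for every integer k ≥ 0, E( f(g) · He_k(g) ) = E( f^{(k)}(g) ), where He_k is the k-th probabilists' Hermite polynomial and f^{(k)} is the k-th derivative of f. -/

import Mathlib

/-!
With the Gaussian weight `e(x) = exp (-x²/2)`, the recursion `He_{k+1} = X He_k - He_k'` says
exactly that `(He_k e)' = -He_{k+1} e`. One integration by parts on the whole line therefore
turns `∫ f He_{k+1} e` into `∫ f' He_k e`, and induction on `k` gives the claim. No boundary terms
appear because every integrand is integrable: `f` and all its derivatives have bounded derivatives,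
hence are Lipschitz, hence grow at most linearly, and polynomials times `e` are integrable.
-/

open MeasureTheory ProbabilityTheory Polynomial Real NNReal

theorem integrable_pow_mul_exp_neg_sq_div_two (n : ℕ) :
    Integrable fun x : ℝ => x ^ n * exp (-(x ^ 2 / 2)) := by
  have h := integrable_rpow_mul_exp_neg_mul_sq (b := 1 / 2) (by norm_num)
    (s := n) (by linarith [n.cast_nonneg (α := ℝ)])
  simpa [Real.rpow_natCast, neg_div, div_eq_inv_mul] using h

theorem integrable_aeval_mul_exp_neg_sq_div_two {R : Type*} [CommSemiring R] [Algebra R ℝ]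
    (p : R[X]) : Integrable fun x : ℝ => aeval x p * exp (-(x ^ 2 / 2)) := by
  induction p using Polynomial.induction_on' with
  | add p q hp hq =>
    simp only [map_add, add_mul]
    exact hp.add hq
  | monomial n a =>
    simpa only [aeval_monomial, mul_assoc] using
      (integrable_pow_mul_exp_neg_sq_div_two n).const_mul (algebraMap R ℝ a)

theorem LipschitzWith.abs_le_add_mul {u : ℝ → ℝ} {K : ℝ≥0} (hu : LipschitzWith K u) (x : ℝ) :
    |u x| ≤ |u 0| + K * |x| := by
  have hdist := hu.dist_le_mul x 0
  rw [Real.dist_eq, Real.dist_eq, sub_zero] at hdist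
  linarith [abs_sub_abs_le_abs_sub (u x) (u 0)]

theorem LipschitzWith.integrable_mul {u g : ℝ → ℝ} {K : ℝ≥0}
    (hu : LipschitzWith K u) (hg : Integrable g) (hxg : Integrable fun x => x * g x) :
    Integrable fun x => u x * g x := by
  refine ((hg.norm.const_mul |u 0|).add (hxg.norm.const_mul K)).mono'
    (hu.continuous.aestronglyMeasurable.mul hg.aestronglyMeasurable) (ae_of_all _ fun x => ?_)
  simp only [Pi.add_apply, norm_mul, Real.norm_eq_abs]
  nlinarith [mul_le_mul_of_nonneg_right (hu.abs_le_add_mul x) (abs_nonneg (g x))]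

theorem LipschitzWith.integrable_mul_aeval_mul_exp_neg_sq_div_two {u : ℝ → ℝ} {K : ℝ≥0}
    (hu : LipschitzWith K u) {R : Type*} [CommSemiring R] [Algebra R ℝ] (p : R[X]) :
    Integrable fun x : ℝ => u x * (aeval x p * exp (-(x ^ 2 / 2))) :=
  hu.integrable_mul (integrable_aeval_mul_exp_neg_sq_div_two p) <| by
    have h := integrable_aeval_mul_exp_neg_sq_div_two (X * p)
    simp only [aeval_mul, aeval_X] at h
    simpa only [mul_assoc] using h

theorem hasDerivAt_aeval_hermite_mul_exp_neg_sq_div_two (k : ℕ) (x : ℝ) :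
    HasDerivAt (fun y => aeval y (hermite k) * exp (-(y ^ 2 / 2)))
      (-(aeval x (hermite (k + 1)) * exp (-(x ^ 2 / 2)))) x := by
  have hexp : HasDerivAt (fun y : ℝ => exp (-(y ^ 2 / 2))) (exp (-(x ^ 2 / 2)) * -x) x := by
    refine (((hasDerivAt_pow 2 x).div_const 2).fun_neg.exp).congr_deriv ?_
    ring
  refine (((hermite k).hasDerivAt_aeval x).mul hexp).congr_deriv ?_
  rw [hermite_succ, map_sub, map_mul, aeval_X]
  ring

theorem integral_mul_aeval_hermite_succ_mul_exp_neg_sq_div_two {u : ℝ → ℝ}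
    (hu : Differentiable ℝ u) {K K' : ℝ≥0} (hK : LipschitzWith K u)
    (hK' : LipschitzWith K' (deriv u)) (k : ℕ) :
    ∫ x, u x * (aeval x (hermite (k + 1)) * exp (-(x ^ 2 / 2))) =
      ∫ x, deriv u x * (aeval x (hermite k) * exp (-(x ^ 2 / 2))) := by
  have hparts := integral_mul_deriv_eq_deriv_mul_of_integrable
    (fun x _ => (hu x).hasDerivAt)
    (fun x _ => hasDerivAt_aeval_hermite_mul_exp_neg_sq_div_two k x)
    (by simpa only [Pi.mul_def, mul_neg, Pi.neg_def] using
      (hK.integrable_mul_aeval_mul_exp_neg_sq_div_two (hermite (k + 1))).neg)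
    (hK'.integrable_mul_aeval_mul_exp_neg_sq_div_two (hermite k))
    (hK.integrable_mul_aeval_mul_exp_neg_sq_div_two (hermite k))
  simpa only [mul_neg, integral_neg, neg_inj] using hparts

theorem integral_mul_aeval_hermite_mul_exp_neg_sq_div_two {f : ℝ → ℝ}
    (hf : ∀ j, Differentiable ℝ (iteratedDeriv j f))
    (hlip : ∀ j, ∃ K, LipschitzWith K (iteratedDeriv j f)) (k : ℕ) :
    ∫ x, f x * (aeval x (hermite k) * exp (-(x ^ 2 / 2))) =
      ∫ x, iteratedDeriv k f x * exp (-(x ^ 2 / 2)) := by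
  induction k generalizing f with
  | zero => simp
  | succ k ih =>
    obtain ⟨K, hK⟩ := hlip 0
    obtain ⟨K', hK'⟩ := hlip 1
    rw [iteratedDeriv_zero] at hK
    rw [iteratedDeriv_one] at hK'
    rw [integral_mul_aeval_hermite_succ_mul_exp_neg_sq_div_two (by simpa using hf 0) hK hK' k,
      iteratedDeriv_succ']
    exact ih (fun j => by simpa only [← iteratedDeriv_succ'] using hf (j + 1))
      (fun j => by simpa only [← iteratedDeriv_succ'] using hlip (j + 1))

theorem integral_gaussianReal_zero_one (h : ℝ → ℝ) :
    ∫ x, h x ∂gaussianReal 0 1 = (√(2 * π))⁻¹ * ∫ x, h x * exp (-(x ^ 2 / 2)) := by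
  rw [integral_gaussianReal_eq_integral_smul one_ne_zero, ← integral_const_mul]
  congr with x
  simp only [gaussianPDFReal, NNReal.coe_one, mul_one, sub_zero, smul_eq_mul]
  ring_nf

/-- Gaussian integration by parts against Hermite polynomials.
If `g` is a standard Gaussian and `f : ℝ → ℝ` is `C^∞` with all derivatives of every
order bounded, then for every `k ≥ 0`, `E(f(g)·He_k(g)) = E(f^{(k)}(g))`, where `He_k`
is the `k`-th probabilists' Hermite polynomial. -/
theorem gaussian_hermite_integration_by_parts (f : ℝ → ℝ)
    (hf : ContDiff ℝ (⊤ : ℕ∞) f)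
    (hbdd : ∀ k : ℕ, 1 ≤ k → ∃ M : ℝ, ∀ x : ℝ, |iteratedDeriv k f x| ≤ M)
    (k : ℕ) :
    ∫ x, f x * (Polynomial.aeval x) (Polynomial.hermite k) ∂(gaussianReal 0 1)
      = ∫ x, iteratedDeriv k f x ∂(gaussianReal 0 1) := by
  have hdiff : ∀ j, Differentiable ℝ (iteratedDeriv j f) := fun j =>
    hf.differentiable_iteratedDeriv j (WithTop.coe_lt_coe.2 (ENat.natCast_lt_top j))
  have hlip : ∀ j, ∃ K, LipschitzWith K (iteratedDeriv j f) := fun j => by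
    obtain ⟨M, hM⟩ := hbdd (j + 1) j.succ_pos
    refine ⟨M.toNNReal, lipschitzWith_of_nnnorm_deriv_le (hdiff j) fun x => ?_⟩
    rw [← iteratedDeriv_succ, ← NNReal.coe_le_coe, coe_nnnorm, Real.coe_toNNReal']
    exact (hM x).trans (le_max_left _ _)
  simp_rw [integral_gaussianReal_zero_one, mul_assoc]
  rw [integral_mul_aeval_hermite_mul_exp_neg_sq_div_two hdiff hlip]
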